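/- arXiv:2102.09330 — 2 statements merged into one kernel-verified Lean document; each statement's English description precedes it below -/
import Mathlib

section
/- Let p be an odd prime and suppose at least 5 of the coefficients a_1,...,a_n (n ≥ 6, counted with multiplicity) are p-adic units. Then for any integers A, B, k, the system a_1x_1^2+...+a_nx_n^2 = 2A+B+k(m-4), a_1x_1+...+a_nx_n = B+k(m-2) is solvable over ℤ_p. -/
/-!
Pick five unit coefficients `α₁, …, α₅`. By Chevalley–Warning (degrees `1 + 1 + 2 < 5`) the
equations `Σ αᵢdᵢ = 0`, `Σ αᵢdᵢ² = 0`, `d₅ = 0` have a nonzero solution mod `p`; lift it to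
`d ∈ ℤ_[p]⁵` with `Σ αᵢdᵢ = 0` exactly and `Σ αᵢdᵢ² ≡ 0`. Since `d` is not constant mod `p`,
some minor `αᵢαⱼ(dᵢ - dⱼ)` is a unit, so there is `x` with `Σ αᵢxᵢ = S` and `Σ αᵢdᵢxᵢ = 1`.
Along the line `x + t d` the linear equation holds identically and the quadratic one becomes
`(Σ αᵢdᵢ²) t² + 2t + (Σ αᵢxᵢ² - Q) = 0`, whose reduction mod `p` is linear with unit slope `2`;
Hensel's lemma gives a root.
-/

open Finset

section ChevalleyWarning

open MvPolynomial

variable {K σ : Type*} [Fintype K] [Field K] [Fintype σ]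

theorem exists_ne_zero_of_sum_totalDegree_lt {ι : Type*} [Fintype ι]
    {f : ι → MvPolynomial σ K} (h : ∑ i, (f i).totalDegree < Fintype.card σ)
    (h0 : ∀ i, eval 0 (f i) = 0) : ∃ x ≠ 0, ∀ i, eval x (f i) = 0 := by
  classical
  obtain ⟨p, _⟩ := CharP.exists K
  have hp : p.Prime := CharP.char_is_prime K p
  have hpos : 0 < Fintype.card {x : σ → K // ∀ i, eval x (f i) = 0} :=
    Fintype.card_pos_iff.mpr ⟨⟨0, h0⟩⟩
  have hdvd := char_dvd_card_solutions_of_fintype_sum_lt p h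
  have hcard := hp.one_lt.trans_le (Nat.le_of_dvd hpos hdvd)
  obtain ⟨⟨x, hx⟩, hne⟩ := Fintype.exists_ne_of_one_lt_card hcard ⟨0, h0⟩
  exact ⟨x, fun h => hne (Subtype.ext h), hx⟩

theorem exists_ne_zero_apply_eq_zero_sum_mul_eq_zero_sum_mul_sq_eq_zero
    (hσ : 4 < Fintype.card σ) (b : σ → K) (j : σ) :
    ∃ d : σ → K, d ≠ 0 ∧ d j = 0 ∧ ∑ i, b i * d i = 0 ∧ ∑ i, b i * d i ^ 2 = 0 := by
  classical
  let f : Fin 3 → MvPolynomial σ K :=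
    ![X j, ∑ i, C (b i) * X i ^ 1, ∑ i, C (b i) * X i ^ 2]
  have hdeg : ∑ k, (f k).totalDegree ≤ 1 + 1 + 2 := by
    simp only [Fin.sum_univ_three, f, Matrix.cons_val_zero, Matrix.cons_val_one,
      Matrix.cons_val_two, Matrix.head_cons, Matrix.tail_cons]
    gcongr
    · exact (totalDegree_X j).le
    all_goals
      exact (IsHomogeneous.sum _ _ _ fun i _ => isHomogeneous_C_mul_X_pow _ _ _).totalDegree_le
  obtain ⟨d, hd, hzero⟩ := exists_ne_zero_of_sum_totalDegree_lt (hdeg.trans_lt hσ)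
    (by simp [f, Fin.forall_fin_succ])
  exact ⟨d, hd, by simpa [f, Fin.forall_fin_succ] using hzero⟩

end ChevalleyWarning

section LinearAlgebra

variable {R ι : Type*} [CommRing R] [Fintype ι] [DecidableEq ι]

theorem exists_lift_sum_mul_eq_zero {S : Type*} [CommRing S] {f : R →+* S}
    (hf : Function.Surjective f) {α : ι → R} {j : ι} (hj : IsUnit (α j)) {y : ι → S}
    (hy : ∑ i, f (α i) * y i = 0) : ∃ x : ι → R, (∀ i, f (x i) = y i) ∧ ∑ i, α i * x i = 0 := by
  choose D hD using fun i => hf (y i)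
  set r := ∑ i, α i * D i
  have hr : f r = 0 := by simp [r, hD, hy]
  refine ⟨D - Pi.single j (hj.unit⁻¹ * r), fun i => ?_, ?_⟩
  · rcases eq_or_ne i j with rfl | hi <;> simp [*]
  · simp [mul_sub, sum_sub_distrib, r, Pi.single_apply, ← mul_assoc]

theorem exists_sum_mul_eq_sum_mul_mul_eq {α d : ι → R} {i j : ι} (hi : IsUnit (α i))
    (hj : IsUnit (α j)) (hd : IsUnit (d i - d j)) (S T : R) :
    ∃ x : ι → R, ∑ k, α k * x k = S ∧ ∑ k, α k * d k * x k = T := by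
  obtain ⟨c, hc⟩ := ((hi.mul hj).mul hd).exists_right_inv
  -- Cramer's rule in the coordinates `i`, `j`; `c` inverts the determinant.
  refine ⟨Pi.single i (α j * (T - d j * S) * c) + Pi.single j (α i * (d i * S - T) * c), ?_, ?_⟩
  all_goals
    simp only [Pi.add_apply, Pi.single_apply, mul_add, mul_ite, mul_zero, sum_add_distrib,
      sum_ite_eq', mem_univ, if_true]
  · linear_combination S * hc
  · linear_combination T * hc

end LinearAlgebra

namespace PadicInt

variable {p : ℕ} [Fact p.Prime]

theorem toZMod_eq_zero_iff_norm_lt_one {z : ℤ_[p]} : toZMod z = 0 ↔ ‖z‖ < 1 := by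
  rw [← RingHom.mem_ker, ker_toZMod, IsLocalRing.mem_maximalIdeal, mem_nonunits]

theorem isUnit_iff_toZMod_ne_zero {z : ℤ_[p]} : IsUnit z ↔ toZMod z ≠ 0 := by
  rw [ne_eq, toZMod_eq_zero_iff_norm_lt_one, ← not_isUnit_iff, not_not]

theorem isUnit_intCast_iff {z : ℤ} : IsUnit (z : ℤ_[p]) ↔ ¬(p : ℤ) ∣ z := by
  rw [← norm_intCast_lt_one_iff, ← not_isUnit_iff, not_not]

theorem isUnit_two (hp : p ≠ 2) : IsUnit (2 : ℤ_[p]) := by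
  rw [← Int.cast_ofNat, isUnit_intCast_iff, Int.natCast_dvd_ofNat,
    Nat.prime_dvd_prime_iff_eq Fact.out Nat.prime_two]
  exact hp

open Polynomial in
theorem exists_mul_sq_add_mul_add_eq_zero {a b : ℤ_[p]} (ha : ‖a‖ < 1) (hb : IsUnit b)
    (c : ℤ_[p]) : ∃ t, a * t ^ 2 + b * t + c = 0 := by
  set F : ℤ_[p][X] := C a * X ^ 2 + C b * X + C c
  obtain ⟨b', hb'⟩ := hb.exists_right_inv
  set t₀ := -c * b'
  have hF : ∀ t, F.aeval t = a * t ^ 2 + b * t + c := by simp [F]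
  have hFt₀ : F.aeval t₀ = a * t₀ ^ 2 := by rw [hF]; linear_combination -c * hb'
  have hF't₀ : ‖F.derivative.aeval t₀‖ = 1 := by
    have : F.derivative.aeval t₀ = b + a * (2 * t₀) := by simp [F]; ring
    rw [← isUnit_iff, isUnit_iff_toZMod_ne_zero, this, map_add, map_mul,
      toZMod_eq_zero_iff_norm_lt_one.mpr ha, zero_mul, add_zero, ← isUnit_iff_toZMod_ne_zero]
    exact hb
  have hnorm : ‖F.aeval t₀‖ < ‖F.derivative.aeval t₀‖ ^ 2 := by
    rw [hF't₀, one_pow, hFt₀, mul_comm]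
    exact norm_lt_one_mul ha
  obtain ⟨t, ht, -⟩ := hensels_lemma hnorm
  exact ⟨t, hF t ▸ ht⟩

variable {ι : Type*} [Fintype ι]

theorem exists_sum_mul_eq_zero_norm_sum_mul_sq_lt_one (hι : 5 ≤ Fintype.card ι)
    {α : ι → ℤ_[p]} {j : ι} (hj : IsUnit (α j)) :
    ∃ d : ι → ℤ_[p], ∃ i, ∑ k, α k * d k = 0 ∧ ‖∑ k, α k * d k ^ 2‖ < 1 ∧
      IsUnit (d i - d j) := by
  classical
  obtain ⟨e, he, hej, he₁, he₂⟩ :=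
    exists_ne_zero_apply_eq_zero_sum_mul_eq_zero_sum_mul_sq_eq_zero hι (toZMod ∘ α) j
  obtain ⟨i, hi⟩ := Function.ne_iff.mp he
  obtain ⟨d, hde, hd⟩ := exists_lift_sum_mul_eq_zero (ZMod.ringHom_surjective toZMod) hj he₁
  refine ⟨d, i, hd, ?_, ?_⟩
  · simpa [← toZMod_eq_zero_iff_norm_lt_one, hde] using he₂
  · simpa [isUnit_iff_toZMod_ne_zero, hde, hej] using hi

theorem exists_sum_mul_eq_sum_mul_sq_eq (hp : p ≠ 2) (hι : 5 ≤ Fintype.card ι)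
    {α : ι → ℤ_[p]} (hα : ∀ i, IsUnit (α i)) (S Q : ℤ_[p]) :
    ∃ w : ι → ℤ_[p], ∑ i, α i * w i = S ∧ ∑ i, α i * w i ^ 2 = Q := by
  classical
  obtain ⟨j⟩ : Nonempty ι := Fintype.card_pos_iff.mp (by omega)
  obtain ⟨d, i, hd₁, hd₂, hdij⟩ := exists_sum_mul_eq_zero_norm_sum_mul_sq_lt_one hι (hα j)
  obtain ⟨x, hx₁, hx₂⟩ := exists_sum_mul_eq_sum_mul_mul_eq (hα i) (hα j) hdij S 1
  obtain ⟨t, ht⟩ := exists_mul_sq_add_mul_add_eq_zero hd₂ (isUnit_two hp)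
    (∑ k, α k * x k ^ 2 - Q)
  refine ⟨fun k => x k + t * d k, ?_, ?_⟩
  · calc ∑ k, α k * (x k + t * d k) = ∑ k, α k * x k + t * ∑ k, α k * d k := by
          simp only [mul_sum, ← sum_add_distrib]
          exact sum_congr rfl fun k _ => by ring
      _ = S := by rw [hx₁, hd₁, mul_zero, add_zero]
  · calc ∑ k, α k * (x k + t * d k) ^ 2
          = ∑ k, α k * x k ^ 2 + 2 * t * ∑ k, α k * d k * x k
            + (∑ k, α k * d k ^ 2) * t ^ 2 := by
          simp only [mul_sum, sum_mul, ← sum_add_distrib]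
          exact sum_congr rfl fun k _ => by ring
      _ = Q := by rw [hx₂]; linear_combination ht

theorem exists_sum_mul_eq_sum_mul_sq_eq_of_subset (hp : p ≠ 2) {s : Finset ι} (hs : 5 ≤ #s)
    {α : ι → ℤ_[p]} (hα : ∀ i ∈ s, IsUnit (α i)) (S Q : ℤ_[p]) :
    ∃ w : ι → ℤ_[p], ∑ i, α i * w i = S ∧ ∑ i, α i * w i ^ 2 = Q := by
  classical
  obtain ⟨w, hw₁, hw₂⟩ := exists_sum_mul_eq_sum_mul_sq_eq hp (by rwa [Fintype.card_coe])
    (α := fun i : s => α i) (fun i => hα i i.2) S Q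
  set v : ι → ℤ_[p] := fun i => if h : i ∈ s then w ⟨i, h⟩ else 0
  have hv : ∀ g : ℤ_[p] → ℤ_[p], g 0 = 0 → ∑ i, α i * g (v i) = ∑ i : s, α i * g (w i) := by
    intro g hg
    rw [← sum_subset (subset_univ s) fun i _ hi => by simp [v, hi, hg], ← sum_coe_sort s]
    exact sum_congr rfl fun i _ => by rw [show v i = w i from dif_pos i.2]
  exact ⟨v, (hv id rfl).trans hw₁, (hv (· ^ 2) (zero_pow two_ne_zero)).trans hw₂⟩

end PadicInt

theorem system_solvable_many_units_general (p : ℕ) [Fact p.Prime] (hp : Odd p)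
    (m : ℤ) (n : ℕ) (a : Fin n → ℤ)
    (hunits : 5 ≤ (univ.filter fun i => ¬ (p : ℤ) ∣ a i).card)
    (A B k : ℤ) :
    ∃ x : Fin n → ℤ_[p],
      (∑ i, (a i : ℤ_[p]) * (x i) ^ 2 =
        ((2 * A + B + k * (m - 4) : ℤ) : ℤ_[p])) ∧
      (∑ i, (a i : ℤ_[p]) * x i = ((B + k * (m - 2) : ℤ) : ℤ_[p])) := by
  obtain ⟨x, hlin, hquad⟩ := PadicInt.exists_sum_mul_eq_sum_mul_sq_eq_of_subset
    (hp.ne_two_of_dvd_nat dvd_rfl) hunits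
    (fun i hi => PadicInt.isUnit_intCast_iff.mpr (mem_filter.mp hi).2) _ _
  exact ⟨x, hquad, hlin⟩

open Finset in
/-- If `p` is an odd prime and at least `5` of the coefficients `a₁,…,aₙ`
(`n ≥ 6`, counted with multiplicity) are `p`-adic units, then for all integers
`A, B, k` the system `Σ aᵢxᵢ² = 2A+B+k(m-4)`, `Σ aᵢxᵢ = B+k(m-2)` is solvable
over `ℤ_[p]`. -/
theorem system_solvable_many_units (p : ℕ) [Fact p.Prime] (hp : Odd p)
    (m : ℤ) (hm : 3 ≤ m) (n : ℕ) (hn : 6 ≤ n) (a : Fin n → ℤ)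
    (ha : ∀ i, 0 < a i)
    (hunits : 5 ≤ (univ.filter fun i => ¬ (p : ℤ) ∣ a i).card)
    (A B k : ℤ) :
    ∃ x : Fin n → ℤ_[p],
      (∑ i, (a i : ℤ_[p]) * (x i) ^ 2 =
        ((2 * A + B + k * (m - 4) : ℤ) : ℤ_[p])) ∧
      (∑ i, (a i : ℤ_[p]) * x i = ((B + k * (m - 2) : ℤ) : ℤ_[p])) :=
  system_solvable_many_units_general p hp m n a hunits A B k
end

section
/- Let p be an odd prime and q ∈ ℚ_p with ord_p(q) < 0. Then {(z - q)^2 : z ∈ ℤ_p} = 2q·ℤ_p + q^2 = q·ℤ_p + q^2. -/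
/-!
Writing `(z - q)² = q (q⁻¹ z² - 2 z) + q²`, the claim reduces to the surjectivity of
`z ↦ q⁻¹ z² - 2 z` on `ℤ_[p]`. Since `‖q⁻¹‖ < 1` and `2` is a unit, this map is a unit times `z`
up to a small perturbation, so Hensel's lemma solves `q⁻¹ z² - 2 z = t` for every `t`.
The same unit `2` gives `2q ℤ_[p] = q ℤ_[p]`.
-/

open Polynomial

namespace PadicInt

variable {p : ℕ} [Fact p.Prime]

theorem isUnit_two_of_odd (hp : Odd p) : IsUnit (2 : ℤ_[p]) := by
  rw [isUnit_iff, ← Nat.cast_ofNat, norm_natCast_eq_one_iff]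
  exact hp.coprime_two_right

theorem norm_mul_le_norm_right (x y : ℤ_[p]) : ‖x * y‖ ≤ ‖y‖ := by
  rw [norm_mul]
  exact mul_le_of_le_one_left (norm_nonneg y) (norm_le_one x)

theorem exists_mul_sq_add_mul_eq {ε b : ℤ_[p]} (hε : ‖ε‖ < 1) (hb : IsUnit b) (t : ℤ_[p]) :
    ∃ z : ℤ_[p], ε * z ^ 2 + b * z = t := by
  obtain ⟨c, hbc⟩ := hb.exists_right_inv
  set F : ℤ_[p][X] := C ε * X ^ 2 + C b * X - C t
  have hF (z : ℤ_[p]) : F.aeval z = ε * z ^ 2 + b * z - t := by simp [F]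
  have hF' (z : ℤ_[p]) : F.derivative.aeval z = b + 2 * ε * z := by
    simp [F, one_add_one_eq_two, add_comm, mul_left_comm, mul_assoc]
  -- `b a = t`, so `F a = ε a²` is small while `F' a = b + 2 ε a` is a unit
  set a := t * c
  have hFa : ‖F.aeval a‖ < 1 := by
    have : F.aeval a = a * a * ε := by rw [hF]; linear_combination t * hbc
    rw [this]
    exact (norm_mul_le_norm_right _ _).trans_lt hε
  have hF'a : ‖F.derivative.aeval a‖ = 1 := by
    have hsmall : ‖2 * ε * a‖ < ‖b‖ := by
      rw [isUnit_iff.1 hb, mul_right_comm]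
      exact (norm_mul_le_norm_right _ _).trans_lt hε
    rw [hF', add_comm, norm_add_eq_max_of_ne hsmall.ne, max_eq_right hsmall.le, ← isUnit_iff]
    exact hb
  obtain ⟨z, hz, -⟩ := hensels_lemma (F := F) (a := a) (by rwa [hF'a, one_pow])
  exact ⟨z, by rwa [hF, sub_eq_zero] at hz⟩

theorem setOf_exists_sub_sq_eq {q : ℚ_[p]} (hq : 1 < ‖q‖) (h2 : IsUnit (2 : ℤ_[p])) :
    {y : ℚ_[p] | ∃ z : ℤ_[p], y = ((z : ℚ_[p]) - q) ^ 2} =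
      {y : ℚ_[p] | ∃ t : ℤ_[p], y = q * (t : ℚ_[p]) + q ^ 2} := by
  have hq0 : q ≠ 0 := norm_pos_iff.1 (one_pos.trans hq)
  let ε : ℤ_[p] := ⟨q⁻¹, by rw [norm_inv]; exact inv_le_one_of_one_le₀ hq.le⟩
  have hε : ‖ε‖ < 1 := by
    change ‖q⁻¹‖ < 1
    rw [norm_inv]; exact inv_lt_one_of_one_lt₀ hq
  have hqε : q * (ε : ℚ_[p]) = 1 := mul_inv_cancel₀ hq0
  have hsq (z : ℤ_[p]) :
      ((z : ℚ_[p]) - q) ^ 2 = q * ((ε * z ^ 2 + -2 * z : ℤ_[p]) : ℚ_[p]) + q ^ 2 := by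
    push_cast [show ((2 : ℤ_[p]) : ℚ_[p]) = 2 from coe_natCast 2]
    linear_combination -(z : ℚ_[p]) ^ 2 * hqε
  ext y
  constructor
  · rintro ⟨z, rfl⟩
    exact ⟨_, hsq z⟩
  · rintro ⟨t, rfl⟩
    obtain ⟨z, hz⟩ := exists_mul_sq_add_mul_eq hε h2.neg t
    exact ⟨z, by rw [hsq, hz]⟩

theorem setOf_exists_unit_mul_add_eq (u : ℤ_[p]ˣ) (q c : ℚ_[p]) :
    {y : ℚ_[p] | ∃ t : ℤ_[p], y = (u : ℤ_[p]) * q * (t : ℚ_[p]) + c} =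
      {y : ℚ_[p] | ∃ t : ℤ_[p], y = q * (t : ℚ_[p]) + c} := by
  have hu : ((u : ℤ_[p]) : ℚ_[p]) * ((u⁻¹ : ℤ_[p]ˣ) : ℤ_[p]) = 1 := by
    rw [← coe_mul, Units.mul_inv, coe_one]
  ext y
  constructor
  · rintro ⟨t, rfl⟩
    exact ⟨u * t, by push_cast; ring⟩
  · rintro ⟨t, rfl⟩
    exact ⟨(u⁻¹ : ℤ_[p]ˣ) * t, by push_cast; linear_combination (-(q * t)) * hu⟩

end PadicInt

/-- For an odd prime `p` and `q ∈ ℚ_[p]` with `ord_p(q) < 0`,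
`{(z-q)² : z ∈ ℤ_[p]} = 2q·ℤ_[p] + q² = q·ℤ_[p] + q²`. -/
theorem translated_squares_padic (p : ℕ) [Fact p.Prime] (hp : Odd p)
    (q : ℚ_[p]) (hq : q.valuation < 0) :
    ({y : ℚ_[p] | ∃ z : ℤ_[p], y = ((z : ℚ_[p]) - q) ^ 2} =
      {y : ℚ_[p] | ∃ t : ℤ_[p], y = 2 * q * (t : ℚ_[p]) + q ^ 2}) ∧
    ({y : ℚ_[p] | ∃ z : ℤ_[p], y = ((z : ℚ_[p]) - q) ^ 2} =
      {y : ℚ_[p] | ∃ t : ℤ_[p], y = q * (t : ℚ_[p]) + q ^ 2}) := by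
  have h2 := PadicInt.isUnit_two_of_odd hp
  have hq' : 1 < ‖q‖ := by
    rw [← not_le, Padic.norm_le_one_iff_val_nonneg, not_le]
    exact hq
  have hsq := PadicInt.setOf_exists_sub_sq_eq hq' h2
  refine ⟨?_, hsq⟩
  rw [hsq, ← PadicInt.setOf_exists_unit_mul_add_eq h2.unit, IsUnit.unit_spec]
  rfl
end
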